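/- Assume δ > 0, β₀ > 0 and β₁ < −δ/(β₀(1 − 2h(x₀))); let x_c ∈ (0, π), τ_c and ω_c = x_c/τ_c be as determined by the system h(ωτ) = (δ + β₀β₁)/(2β₀β₁), (cos(ωτ) − 1)/(ωτ)² = 1/(2β₀β₁τ). Then the transversality quantity ν′ := Re(−Δ_τ(iω_c, τ_c)/Δ_λ(iω_c, τ_c)) satisfies |Δ_λ(iω_c, τ_c)|² · ν′ = (2β₀β₁/τ_c)·(x_c cos(x_c) − sin(x_c))/x_c, and this quantity is strictly positive; hence ν′ > 0. -/

import Mathlib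

/-!
Integration by parts gives `Δ_τ(λ, τ) = (λ/τ) (Δ_λ(λ, τ) - 1)` for every `λ`. Since `Re(i/z) = Im z / |z|²`,
at `λ = iω` this turns `|Δ_λ|² ν′` into `(ω/τ) Im Δ_λ(iω, τ)`, and `Im Δ_λ(iω, τ)` is the elementary
integral `-(2β₀β₁/τ) ∫_{-τ}^0 s sin(ωs) ds`. For the sign, the second equation of the system forces
`2β₀β₁τ < 0` because `cos x_c < 1`, and `x cos x < sin x` on `(0, π)`.
-/

/-- `Δ_λ(λ,τ) = 1 − (2β₀β₁/τ)∫_{−τ}^{0} s e^{λ s} ds`, the partial derivative in `λ`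
of the characteristic function. -/
noncomputable def charFnD (β₀ β₁ τ : ℝ) (lam : ℂ) : ℂ :=
  1 - ((2 * β₀ * β₁ / τ : ℝ) : ℂ) * ∫ s in (-τ)..(0 : ℝ), (s : ℂ) * Complex.exp (lam * (s : ℂ))

/-- `Δ_τ(λ,τ) = (2β₀β₁/τ²)∫_{−τ}^{0} e^{λ s} ds − (2β₀β₁/τ)e^{−λτ}`, the partial derivative
in `τ` of the characteristic function. -/
noncomputable def charFnT (β₀ β₁ τ : ℝ) (lam : ℂ) : ℂ :=
  ((2 * β₀ * β₁ / τ ^ 2 : ℝ) : ℂ) * (∫ s in (-τ)..(0 : ℝ), Complex.exp (lam * (s : ℂ))) -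
    ((2 * β₀ * β₁ / τ : ℝ) : ℂ) * Complex.exp (-lam * (τ : ℂ))

/-- `h(x) = sin(x)/x`. -/
noncomputable def hfun (x : ℝ) : ℝ := Real.sin x / x

/-- `x₀`, the smallest `x > 0` with `x = tan x` and `h(x) > 0` (numerically `x₀ ≈ 7.725`). -/
noncomputable def xZero : ℝ := sInf {x : ℝ | 0 < x ∧ x = Real.tan x ∧ 0 < hfun x}

/-- The system: `sin(ωτ)/(ωτ) = (δ+β₀β₁)/(2β₀β₁)` and `(cos(ωτ) − 1)/(ωτ)² = 1/(2β₀β₁τ)`. -/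
def sys (δ β₀ β₁ ω τ : ℝ) : Prop :=
  Real.sin (ω * τ) / (ω * τ) = (δ + β₀ * β₁) / (2 * β₀ * β₁) ∧
  (Real.cos (ω * τ) - 1) / (ω * τ) ^ 2 = 1 / (2 * β₀ * β₁ * τ)

open Complex in
theorem mul_integral_mul_cexp_mul (c : ℂ) (a b : ℝ) :
    c * ∫ x in a..b, (x : ℂ) * exp (c * x) =
      b * exp (c * b) - a * exp (c * a) - ∫ x in a..b, exp (c * x) := by
  have hderiv : ∀ x : ℝ, HasDerivAt (fun y : ℝ => (y : ℂ) * exp (c * y))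
      (exp (c * x) + c * ((x : ℂ) * exp (c * x))) x := by
    intro x
    have hexp : HasDerivAt (fun y : ℝ => exp (c * y)) (exp (c * x) * c) x := by
      simpa using ((hasDerivAt_id (x : ℂ)).const_mul c).cexp.comp_ofReal
    exact ((hasDerivAt_id (x : ℂ)).comp_ofReal.mul hexp).congr_deriv (by simp only [id]; ring)
  have hint : ∀ f : ℝ → ℂ, Continuous f → IntervalIntegrable f MeasureTheory.volume a b :=
    fun f hf => hf.intervalIntegrable a b
  have hftc := intervalIntegral.integral_eq_sub_of_hasDerivAt (fun x _ => hderiv x)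
    (hint _ (by fun_prop))
  rw [intervalIntegral.integral_add (hint _ (by fun_prop)) (hint _ (by fun_prop)),
    intervalIntegral.integral_const_mul] at hftc
  linear_combination hftc

theorem charFnT_eq (β₀ β₁ τ : ℝ) (lam : ℂ) :
    charFnT β₀ β₁ τ lam = lam / τ * (charFnD β₀ β₁ τ lam - 1) := by
  have hparts := mul_integral_mul_cexp_mul lam (-τ) 0
  rw [charFnT, charFnD, sub_sub_cancel_left, mul_neg, mul_left_comm, div_mul_eq_mul_div,
    mul_assoc, hparts]
  rcases eq_or_ne τ 0 with rfl | hτ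
  · simp
  · push_cast
    field_simp
    ring

open Complex in
theorem sq_norm_mul_re_neg_I_mul_sub_one_div (r : ℝ) (z : ℂ) :
    ‖z‖ ^ 2 * (-(I * r * (z - 1)) / z).re = r * z.im := by
  rcases eq_or_ne z 0 with rfl | hz
  · simp
  rw [Complex.sq_norm, div_re, ← add_div, mul_div_cancel₀ _ (normSq_pos.2 hz).ne']
  simp only [neg_re, neg_im, mul_re, mul_im, sub_re, sub_im, I_re, I_im, ofReal_re, ofReal_im,
    one_re, one_im]
  ring

theorem integral_mul_sin_mul {ω : ℝ} (hω : ω ≠ 0) (a b : ℝ) :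
    ∫ x in a..b, x * Real.sin (ω * x) =
      (a * Real.cos (ω * a) - b * Real.cos (ω * b)) / ω +
        (Real.sin (ω * b) - Real.sin (ω * a)) / ω ^ 2 := by
  have hderiv : ∀ x : ℝ, HasDerivAt
      (fun y => -(y * Real.cos (ω * y)) / ω + Real.sin (ω * y) / ω ^ 2)
      (x * Real.sin (ω * x)) x := by
    intro x
    have hlin : HasDerivAt (fun y => ω * y) ω x := by simpa using (hasDerivAt_id x).const_mul ω
    refine ((((hasDerivAt_id x).mul hlin.cos).neg.div_const ω).add
      (hlin.sin.div_const (ω ^ 2))).congr_deriv ?_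
    simp only [id]
    field_simp
    ring
  rw [intervalIntegral.integral_eq_sub_of_hasDerivAt (fun x _ => hderiv x)
    ((by fun_prop : Continuous fun x => x * Real.sin (ω * x)).intervalIntegrable a b)]
  ring

theorem im_charFnD_I_mul (β₀ β₁ : ℝ) {ω : ℝ} (hω : ω ≠ 0) (τ : ℝ) :
    (charFnD β₀ β₁ τ (Complex.I * ω)).im =
      2 * β₀ * β₁ / τ * (τ * Real.cos (ω * τ) / ω - Real.sin (ω * τ) / ω ^ 2) := by
  have hcont : Continuous fun s : ℝ => (s : ℂ) * Complex.exp (Complex.I * ω * s) := by fun_prop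
  have him : (∫ s in (-τ)..(0 : ℝ), (s : ℂ) * Complex.exp (Complex.I * ω * s)).im =
      ∫ s in (-τ)..(0 : ℝ), s * Real.sin (ω * s) := by
    rw [← RCLike.im_to_complex, ← intervalIntegral.intervalIntegral_im (hcont.intervalIntegrable _ _)]
    simp [Complex.exp_im]
  rw [charFnD, Complex.sub_im, Complex.im_ofReal_mul, him, integral_mul_sin_mul hω]
  simp only [Complex.one_im, mul_zero, mul_neg, neg_mul, Real.cos_neg, Real.sin_neg, Real.cos_zero,
    Real.sin_zero]
  field_simp
  ring

theorem sq_norm_charFnD_mul_re_neg_charFnT_div (β₀ β₁ ω τ : ℝ) :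
    ‖charFnD β₀ β₁ τ (Complex.I * ω)‖ ^ 2 *
        (-(charFnT β₀ β₁ τ (Complex.I * ω)) / charFnD β₀ β₁ τ (Complex.I * ω)).re =
      ω / τ * (charFnD β₀ β₁ τ (Complex.I * ω)).im := by
  have hcoeff : Complex.I * ω / τ = Complex.I * ((ω / τ : ℝ) : ℂ) := by push_cast; ring
  rw [charFnT_eq, hcoeff, sq_norm_mul_re_neg_I_mul_sub_one_div]

theorem mul_cos_lt_sin {x : ℝ} (hx₀ : 0 < x) (hxπ : x < Real.pi) : x * Real.cos x < Real.sin x := by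
  have hsin := Real.sin_pos_of_pos_of_lt_pi hx₀ hxπ
  rcases le_or_gt (Real.cos x) 0 with hcos | hcos
  · nlinarith
  · have hxπ2 : x < Real.pi / 2 := by
      by_contra! h
      exact hcos.not_ge (Real.cos_nonpos_of_pi_div_two_le_of_le h (by linarith))
    simpa [Real.tan_eq_sin_div_cos, lt_div_iff₀ hcos] using Real.lt_tan hx₀ hxπ2

theorem sys.two_mul_mul_div_neg {δ β₀ β₁ ω τ : ℝ} (hsys : sys δ β₀ β₁ ω τ)
    (hx : ω * τ ∈ Set.Ioo 0 Real.pi) : 2 * β₀ * β₁ / τ < 0 := by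
  have hcos : Real.cos (ω * τ) < 1 := by
    simpa using Real.cos_lt_cos_of_nonneg_of_le_pi le_rfl hx.2.le hx.1
  have hrecip : 1 / (2 * β₀ * β₁ * τ) < 0 :=
    hsys.2 ▸ div_neg_of_neg_of_pos (sub_neg.2 hcos) (pow_pos hx.1 2)
  exact div_neg_iff.2 (mul_neg_iff.1 (one_div_neg.1 hrecip))

theorem transversality_general
    (δ β₀ β₁ ω_c τ_c : ℝ)
    (hx_c : ω_c * τ_c ∈ Set.Ioo 0 Real.pi)
    (hsys : sys δ β₀ β₁ ω_c τ_c) :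
    ‖charFnD β₀ β₁ τ_c (Complex.I * (ω_c : ℂ))‖ ^ 2 *
        (-(charFnT β₀ β₁ τ_c (Complex.I * (ω_c : ℂ))) /
          charFnD β₀ β₁ τ_c (Complex.I * (ω_c : ℂ))).re =
      (2 * β₀ * β₁ / τ_c) *
        ((ω_c * τ_c * Real.cos (ω_c * τ_c) - Real.sin (ω_c * τ_c)) / (ω_c * τ_c)) ∧
    0 < (2 * β₀ * β₁ / τ_c) *
        ((ω_c * τ_c * Real.cos (ω_c * τ_c) - Real.sin (ω_c * τ_c)) / (ω_c * τ_c)) ∧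
    0 < (-(charFnT β₀ β₁ τ_c (Complex.I * (ω_c : ℂ))) /
          charFnD β₀ β₁ τ_c (Complex.I * (ω_c : ℂ))).re := by
  have hω : ω_c ≠ 0 := left_ne_zero_of_mul hx_c.1.ne'
  have hidentity : ‖charFnD β₀ β₁ τ_c (Complex.I * (ω_c : ℂ))‖ ^ 2 *
        (-(charFnT β₀ β₁ τ_c (Complex.I * (ω_c : ℂ))) /
          charFnD β₀ β₁ τ_c (Complex.I * (ω_c : ℂ))).re =
      (2 * β₀ * β₁ / τ_c) *
        ((ω_c * τ_c * Real.cos (ω_c * τ_c) - Real.sin (ω_c * τ_c)) / (ω_c * τ_c)) := by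
    rw [sq_norm_charFnD_mul_re_neg_charFnT_div, im_charFnD_I_mul β₀ β₁ hω]
    field_simp
  have hpos : 0 < (2 * β₀ * β₁ / τ_c) *
      ((ω_c * τ_c * Real.cos (ω_c * τ_c) - Real.sin (ω_c * τ_c)) / (ω_c * τ_c)) :=
    mul_pos_of_neg_of_neg (hsys.two_mul_mul_div_neg hx_c)
      (div_neg_of_neg_of_pos (sub_neg.2 (mul_cos_lt_sin hx_c.1 hx_c.2)) hx_c.1)
  exact ⟨hidentity, hpos, pos_of_mul_pos_right (hidentity ▸ hpos) (sq_nonneg _)⟩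

/-- transversality: with `x_c = ω_c τ_c`, the quantity
`ν′ = Re(−Δ_τ(iω_c,τ_c)/Δ_λ(iω_c,τ_c))` satisfies
`|Δ_λ(iω_c,τ_c)|² ν′ = (2β₀β₁/τ_c)(x_c cos x_c − sin x_c)/x_c > 0`, hence `ν′ > 0`. -/
theorem transversality
    (δ β₀ β₁ ω_c τ_c : ℝ) (hδ : 0 < δ) (hβ₀ : 0 < β₀)
    (hβ₁ : β₁ < -δ / (β₀ * (1 - 2 * hfun xZero)))
    (hω_c : 0 < ω_c) (hτ_c : 0 < τ_c)
    (hx_c : ω_c * τ_c ∈ Set.Ioo 0 Real.pi)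
    (hsys : sys δ β₀ β₁ ω_c τ_c) :
    ‖charFnD β₀ β₁ τ_c (Complex.I * (ω_c : ℂ))‖ ^ 2 *
        (-(charFnT β₀ β₁ τ_c (Complex.I * (ω_c : ℂ))) /
          charFnD β₀ β₁ τ_c (Complex.I * (ω_c : ℂ))).re =
      (2 * β₀ * β₁ / τ_c) *
        ((ω_c * τ_c * Real.cos (ω_c * τ_c) - Real.sin (ω_c * τ_c)) / (ω_c * τ_c)) ∧
    0 < (2 * β₀ * β₁ / τ_c) *
        ((ω_c * τ_c * Real.cos (ω_c * τ_c) - Real.sin (ω_c * τ_c)) / (ω_c * τ_c)) ∧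
    0 < (-(charFnT β₀ β₁ τ_c (Complex.I * (ω_c : ℂ))) /
          charFnD β₀ β₁ τ_c (Complex.I * (ω_c : ℂ))).re :=
  transversality_general δ β₀ β₁ ω_c τ_c hx_c hsys
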